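/- Let N ≥ 2 and let A be the (N+1)×(N+1) matrix equal to the P_N closure matrix except in the last row, which is (0,…,0, a_{N−2}, a_{N−1}, a_N). If a_{N−1} > ((2N−1)/(N−1)²)·a_{N−2}·(N·a_{N−2} − (N−1)·a_N), then there exists a symmetric positive definite matrix A₀ = diag(D, B), with D = diag(1, 3, …, 2N−3) and B a 2×2 symmetric positive definite matrix, such that A₀A is symmetric; hence A is real diagonalizable. -/

import Mathlib

/-!
Write `N = n + 2` and split the indices as `{0, …, n} ⊔ {n + 1, n + 2}`. The first `N` rows of the
closure matrix are the `P_N` recurrence, which `diag(2i + 1)` symmetrizes, so `A₀ = diag(D, B)`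
symmetrizes `A` as soon as `B = [p q; q s]` satisfies three linear equations: two couple row `N - 1`
to row `N - 2`, one makes the lower `2 × 2` block of `A₀ A` symmetric. The first two fix `p` and `q`
in terms of `s`, the third then reads `s δ = N` where `δ > 0` is the hypothesis, and
`det B = (2N - 1) s > 0`. Finally, a matrix with a positive definite symmetrizer is similar,
through `A₀ ^ (1/2)`, to a symmetric matrix, hence real diagonalizable.
-/

open Matrix

def RealDiagonalizable {n : ℕ} (A : Matrix (Fin n) (Fin n) ℝ) : Prop :=
  ∃ P D : Matrix (Fin n) (Fin n) ℝ, IsUnit P.det ∧ D.IsDiag ∧ A = P⁻¹ * D * P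

noncomputable def closureMatrix (N : ℕ) (lastRow : Fin (N + 1) → ℝ) :
    Matrix (Fin (N + 1)) (Fin (N + 1)) ℝ := fun i j =>
  if (i : ℕ) = N then lastRow j
  else if (j : ℕ) = (i : ℕ) + 1 then (((i : ℕ) : ℝ) + 1) / (2 * ((i : ℕ) : ℝ) + 1)
  else if (i : ℕ) = (j : ℕ) + 1 then ((i : ℕ) : ℝ) / (2 * ((i : ℕ) : ℝ) + 1)
  else 0

namespace Matrix

variable {m n R : Type*} [Fintype m] [Fintype n]
  [CommRing R] [PartialOrder R] [StarRing R] [IsOrderedAddMonoid R]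

theorem PosDef.fromBlocks_zero {A : Matrix m m R} {D : Matrix n n R} (hA : A.PosDef)
    (hD : D.PosDef) : (fromBlocks A 0 0 D).PosDef := by
  refine posDef_iff_dotProduct_mulVec.2 ⟨hA.isHermitian.fromBlocks (by simp) hD.isHermitian,
    fun x hx => ?_⟩
  obtain ⟨u, v, rfl⟩ : ∃ u v, x = Sum.elim u v := ⟨_, _, (Sum.elim_comp_inl_inr x).symm⟩
  have hstar : star (Sum.elim u v) = Sum.elim (star u) (star v) := by ext (_ | _) <;> rfl
  rw [hstar, fromBlocks_mulVec]
  simp only [zero_mulVec, add_zero, zero_add, Sum.elim_comp_inl, Sum.elim_comp_inr,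
    sumElim_dotProduct_sumElim]
  by_cases hu : u = 0
  · subst hu
    have hv : v ≠ 0 := fun hv => hx (by simp [hv])
    simpa using hD.dotProduct_mulVec_pos hv
  · exact add_pos_of_pos_of_nonneg (hA.dotProduct_mulVec_pos hu)
      (hD.posSemidef.dotProduct_mulVec_nonneg _)

theorem posDef_fin_two {K : Type*} [Field K] [LinearOrder K] [IsStrictOrderedRing K] [StarRing K]
    [TrivialStar K] {a b d : K} (ha : 0 < a) (hdet : 0 < a * d - b ^ 2) :
    (!![a, b; b, d]).PosDef := by
  refine posDef_iff_dotProduct_mulVec.2 ⟨?_, fun x hx => ?_⟩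
  · ext i j; fin_cases i <;> fin_cases j <;> simp
  simp only [star_trivial, dotProduct, mulVec, Fin.sum_univ_two, cons_val_zero, cons_val_one,
    of_apply]
  by_cases hx₁ : x 1 = 0
  · have hx₀ : x 0 ≠ 0 := fun hx₀ => hx (funext fun i => by fin_cases i <;> simp [hx₀, hx₁])
    rw [hx₁]
    nlinarith [mul_self_pos.2 hx₀]
  · have hquad : 0 < a * (x 0 * (a * x 0 + b * x 1) + x 1 * (b * x 0 + d * x 1)) := by
      nlinarith [sq_nonneg (a * x 0 + b * x 1), mul_pos hdet (mul_self_pos.2 hx₁)]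
    exact pos_of_mul_pos_right hquad ha.le

end Matrix

section RealDiagonalizable

variable {n : ℕ}

theorem Matrix.IsHermitian.realDiagonalizable {M : Matrix (Fin n) (Fin n) ℝ}
    (hM : M.IsHermitian) : RealDiagonalizable M := by
  set U := hM.eigenvectorUnitary
  have hU : (U : Matrix (Fin n) (Fin n) ℝ) * star (U : Matrix (Fin n) (Fin n) ℝ) = 1 :=
    Unitary.mul_star_self_of_mem U.2
  refine ⟨star U, diagonal (RCLike.ofReal ∘ hM.eigenvalues), isUnit_det_of_left_inverse hU,
    isDiag_diagonal _, ?_⟩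
  rw [inv_eq_left_inv hU]
  exact hM.spectral_theorem

theorem RealDiagonalizable.conj {M C : Matrix (Fin n) (Fin n) ℝ} (hM : RealDiagonalizable M)
    (hC : IsUnit C.det) : RealDiagonalizable (C⁻¹ * M * C) := by
  obtain ⟨P, D, hP, hD, rfl⟩ := hM
  refine ⟨P * C, D, by rw [det_mul]; exact hP.mul hC, hD, ?_⟩
  simp only [Matrix.mul_inv_rev, Matrix.mul_assoc]

open scoped MatrixOrder in
theorem realDiagonalizable_of_posDef_mul_isSymm {A A₀ : Matrix (Fin n) (Fin n) ℝ}
    (hA₀ : A₀.PosDef) (hA : (A₀ * A).IsSymm) : RealDiagonalizable A := by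
  set C := CFC.sqrt A₀
  have hCC : C * C = A₀ := CFC.sqrt_mul_sqrt_self A₀ hA₀.posSemidef.nonneg
  have hC : IsUnit C.det := by
    refine isUnit_iff_ne_zero.2 fun h => hA₀.det_pos.ne' ?_
    rw [← hCC, det_mul, h, zero_mul]
  have hCsymm : C.IsSymm := (CFC.sqrt_nonneg A₀).posSemidef.isHermitian
  have hM : (C⁻¹ * (A₀ * A) * C⁻¹).IsHermitian := by
    rw [IsHermitian, conjTranspose_eq_transpose_of_trivial, transpose_mul, transpose_mul,
      transpose_nonsing_inv, hA.eq, hCsymm.eq]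
    simp only [Matrix.mul_assoc]
  convert hM.realDiagonalizable.conj hC using 1
  rw [← hCC, Matrix.mul_assoc C C A, nonsing_inv_mul_cancel_left _ _ hC, Matrix.mul_assoc,
    nonsing_inv_mul_cancel_right _ _ hC, nonsing_inv_mul_cancel_left _ _ hC]

end RealDiagonalizable

theorem closureMatrix_symmetrized {N : ℕ} (r : Fin (N + 1) → ℝ) {i j : Fin (N + 1)}
    (hi : (i : ℕ) < N) (hj : (j : ℕ) < N) :
    (2 * ((i : ℕ) : ℝ) + 1) * closureMatrix N r i j =
      (2 * ((j : ℕ) : ℝ) + 1) * closureMatrix N r j i := by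
  have hi' : (0 : ℝ) < 2 * (i : ℕ) + 1 := by positivity
  have hj' : (0 : ℝ) < 2 * (j : ℕ) + 1 := by positivity
  simp only [closureMatrix, hi.ne, hj.ne, if_false]
  split_ifs with hji _ hij <;> try omega
  · rw [mul_div_cancel₀ _ hi'.ne', mul_div_cancel₀ _ hj'.ne', hji, Nat.cast_succ]
  · rw [mul_div_cancel₀ _ hi'.ne', mul_div_cancel₀ _ hj'.ne', hij, Nat.cast_succ]
  · simp

-- `n + 2` plays the role of `N`: indexing by `n = N - 2` keeps truncated subtraction out.
noncomputable def modifiedClosureMatrix (n : ℕ) (a₂ a₁ a₀ : ℝ) :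
    Matrix (Fin (n + 2 + 1)) (Fin (n + 2 + 1)) ℝ :=
  closureMatrix (n + 2) fun j =>
    if (j : ℕ) = n then a₂ else if (j : ℕ) = n + 1 then a₁
    else if (j : ℕ) = n + 2 then a₀ else 0

def closureBlockEquiv (n : ℕ) : Fin (n + 1) ⊕ Fin 2 ≃ Fin (n + 2 + 1) := finSumFinEquiv

@[simp] theorem closureBlockEquiv_inl (n : ℕ) (k : Fin (n + 1)) :
    (closureBlockEquiv n (.inl k) : ℕ) = k := rfl

@[simp] theorem closureBlockEquiv_inr (n : ℕ) (q : Fin 2) :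
    (closureBlockEquiv n (.inr q) : ℕ) = n + 1 + q := rfl

def closureSymmetrizer (n : ℕ) (B : Matrix (Fin 2) (Fin 2) ℝ) :
    Matrix (Fin (n + 2 + 1)) (Fin (n + 2 + 1)) ℝ :=
  (fromBlocks (diagonal fun k : Fin (n + 1) => 2 * ((k : ℕ) : ℝ) + 1) 0 0 B).submatrix
    (closureBlockEquiv n).symm (closureBlockEquiv n).symm

theorem closureSymmetrizer_apply_of_lt {n : ℕ} (B : Matrix (Fin 2) (Fin 2) ℝ)
    {i : Fin (n + 2 + 1)} (hi : (i : ℕ) < n + 1) (j : Fin (n + 2 + 1)) :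
    closureSymmetrizer n B i j = if i = j then 2 * ((i : ℕ) : ℝ) + 1 else 0 := by
  obtain ⟨k, rfl⟩ : ∃ k, closureBlockEquiv n (.inl k) = i := ⟨⟨i, hi⟩, rfl⟩
  obtain ⟨l | q, rfl⟩ := (closureBlockEquiv n).surjective j
  · simp [closureSymmetrizer, diagonal_apply]
  · simp [closureSymmetrizer]

theorem closureSymmetrizer_posDef (n : ℕ) {B : Matrix (Fin 2) (Fin 2) ℝ} (hB : B.PosDef) :
    (closureSymmetrizer n B).PosDef :=
  (PosDef.fromBlocks_zero (posDef_diagonal_iff.2 fun _ => by positivity) hB).submatrix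
    (closureBlockEquiv n).symm.injective

section ClosureBlocks

variable (n : ℕ) (a₂ a₁ a₀ : ℝ)

theorem modifiedClosureMatrix_toBlocks₁₂_apply (k : Fin (n + 1)) (q : Fin 2) :
    toBlocks₁₂ ((modifiedClosureMatrix n a₂ a₁ a₀).submatrix
      (closureBlockEquiv n) (closureBlockEquiv n)) k q =
      if (k : ℕ) = n ∧ q = 0 then ((n : ℝ) + 1) / (2 * n + 1) else 0 := by
  dsimp only [toBlocks₁₂, of_apply, submatrix_apply,
    closureBlockEquiv_inl, closureBlockEquiv_inr, modifiedClosureMatrix, closureMatrix]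
  grind

theorem modifiedClosureMatrix_toBlocks₂₁_apply (q : Fin 2) (k : Fin (n + 1)) :
    toBlocks₂₁ ((modifiedClosureMatrix n a₂ a₁ a₀).submatrix
      (closureBlockEquiv n) (closureBlockEquiv n)) q k =
      if (k : ℕ) = n then ![((n : ℝ) + 1) / (2 * n + 3), a₂] q else 0 := by
  fin_cases q <;>
    dsimp only [toBlocks₂₁, of_apply, submatrix_apply,
      closureBlockEquiv_inl, closureBlockEquiv_inr, modifiedClosureMatrix, closureMatrix] <;>
    simp only [Fin.zero_eta, Fin.mk_one, cons_val_zero, cons_val_one] <;> grind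

theorem modifiedClosureMatrix_toBlocks₂₂ :
    toBlocks₂₂ ((modifiedClosureMatrix n a₂ a₁ a₀).submatrix
      (closureBlockEquiv n) (closureBlockEquiv n)) =
      !![0, ((n : ℝ) + 2) / (2 * n + 3); a₁, a₀] := by
  ext q q'
  fin_cases q <;> fin_cases q' <;>
    dsimp only [toBlocks₂₂, of_apply, submatrix_apply,
      closureBlockEquiv_inl, closureBlockEquiv_inr, modifiedClosureMatrix, closureMatrix] <;>
    simp only [Fin.zero_eta, Fin.mk_one, cons_val_zero, cons_val_one] <;> grind

end ClosureBlocks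

theorem isSymm_closureSymmetrizer_mul {n : ℕ} {a₂ a₁ a₀ p q s : ℝ}
    (h₁ : p * ((n + 1) / (2 * n + 3)) + q * a₂ = n + 1)
    (h₂ : q * ((n + 1) / (2 * n + 3)) + s * a₂ = 0)
    (h₃ : p * ((n + 2) / (2 * n + 3)) + q * a₀ = s * a₁) :
    (closureSymmetrizer n !![p, q; q, s] * modifiedClosureMatrix n a₂ a₁ a₀).IsSymm := by
  have hblocks : closureSymmetrizer n !![p, q; q, s] * modifiedClosureMatrix n a₂ a₁ a₀ =
      (fromBlocks (diagonal fun k : Fin (n + 1) => 2 * ((k : ℕ) : ℝ) + 1) 0 0 !![p, q; q, s] *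
        (modifiedClosureMatrix n a₂ a₁ a₀).submatrix (closureBlockEquiv n) (closureBlockEquiv n)
        ).submatrix (closureBlockEquiv n).symm (closureBlockEquiv n).symm := by
    rw [← submatrix_mul_equiv _ _ _ (closureBlockEquiv n).symm, closureSymmetrizer]
    simp
  rw [hblocks, ← fromBlocks_toBlocks (submatrix _ _ _), fromBlocks_multiply]
  simp only [Matrix.zero_mul, add_zero, zero_add]
  refine (IsSymm.fromBlocks ?_ ?_ ?_).submatrix _
  · refine IsSymm.ext fun k l => ?_
    simp only [diagonal_mul, toBlocks₁₁, of_apply, submatrix_apply]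
    exact closureMatrix_symmetrized (i := closureBlockEquiv n (.inl l))
      (j := closureBlockEquiv n (.inl k)) _ (by simp; omega) (by simp; omega)
  · ext r k
    rw [transpose_apply, diagonal_mul, mul_apply, Fin.sum_univ_two,
      modifiedClosureMatrix_toBlocks₁₂_apply, modifiedClosureMatrix_toBlocks₂₁_apply,
      modifiedClosureMatrix_toBlocks₂₁_apply]
    by_cases hk : (k : ℕ) = n
    · have : (2 * (n : ℝ) + 1) ≠ 0 := by positivity
      fin_cases r
      · simpa [hk, mul_div_cancel₀ _ this] using h₁.symm
      · simpa [hk] using h₂.symm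
    · simp [hk]
  · rw [modifiedClosureMatrix_toBlocks₂₂, mul_fin_two]
    refine IsSymm.ext fun i j => ?_
    fin_cases i <;> fin_cases j <;> simp [h₃]

theorem exists_closureSymmetrizer_block (n : ℕ) {a₂ a₁ a₀ : ℝ}
    (h : (2 * n + 3) / ((n : ℝ) + 1) ^ 2 * a₂ * ((n + 2) * a₂ - (n + 1) * a₀) < a₁) :
    ∃ p q s : ℝ, (!![p, q; q, s]).PosDef ∧
      p * ((n + 1) / (2 * n + 3)) + q * a₂ = n + 1 ∧
      q * ((n + 1) / (2 * n + 3)) + s * a₂ = 0 ∧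
      p * ((n + 2) / (2 * n + 3)) + q * a₀ = s * a₁ := by
  have hn₁ : (n : ℝ) + 1 ≠ 0 := by positivity
  have hn₃ : 2 * (n : ℝ) + 3 ≠ 0 := by positivity
  -- In terms of `c` the second equation says `q = -s c`.
  obtain ⟨c, rfl⟩ : ∃ c, a₂ = c * (n + 1) / (2 * n + 3) :=
    ⟨a₂ * (2 * n + 3) / (n + 1), by field_simp⟩
  have hδ : 0 < a₁ - c * ((n + 2) * c / (2 * n + 3) - a₀) := by
    convert sub_pos.2 h using 2
    field_simp
  obtain ⟨s, hs, hsδ⟩ :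
      ∃ s : ℝ, 0 < s ∧ s * (a₁ - c * ((n + 2) * c / (2 * n + 3) - a₀)) = n + 2 :=
    ⟨(n + 2) / _, by positivity, div_mul_cancel₀ _ hδ.ne'⟩
  have hdet : (2 * n + 3 + s * c ^ 2) * s - (-(s * c)) ^ 2 = (2 * n + 3) * s := by ring
  refine ⟨2 * n + 3 + s * c ^ 2, -(s * c), s,
    posDef_fin_two (by positivity) (by rw [hdet]; positivity), ?_, ?_, ?_⟩
  · field_simp; ring
  · field_simp; ring
  · field_simp at hsδ ⊢
    linear_combination -hsδ

/-- Hyperbolicity of the 3-degree-of-freedom ML closure: under the constraint on `a_{N-1}`,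
there exists a symmetrizer `A₀ = diag(1, 3, …, 2N-3, B)` with `B` a `2×2` SPD block such
that `A₀ * A` is symmetric; hence `A` is real diagonalizable. -/
theorem closure_dof3_hyperbolic (N : ℕ) (hN : 2 ≤ N) (a2 a1 a0 : ℝ)
    (h : a1 > (2 * (N : ℝ) - 1) / ((N : ℝ) - 1) ^ 2 * a2 *
      ((N : ℝ) * a2 - ((N : ℝ) - 1) * a0)) :
    let A := closureMatrix N fun j =>
      if (j : ℕ) = N - 2 then a2 else if (j : ℕ) = N - 1 then a1
      else if (j : ℕ) = N then a0 else 0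
    ∃ A₀ : Matrix (Fin (N + 1)) (Fin (N + 1)) ℝ,
      A₀.PosDef ∧
      (∀ i j : Fin (N + 1), (i : ℕ) < N - 1 → i ≠ j → A₀ i j = 0) ∧
      (∀ i : Fin (N + 1), (i : ℕ) < N - 1 → A₀ i i = 2 * ((i : ℕ) : ℝ) + 1) ∧
      (A₀ * A).IsSymm ∧ RealDiagonalizable A := by
  obtain ⟨n, rfl⟩ := Nat.exists_eq_add_of_le' hN
  have h' : (2 * n + 3) / ((n : ℝ) + 1) ^ 2 * a2 * ((n + 2) * a2 - (n + 1) * a0) < a1 := by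
    convert h using 2 <;> push_cast <;> ring
  obtain ⟨p, q, s, hB, h₁, h₂, h₃⟩ := exists_closureSymmetrizer_block n h'
  have hA₀ := closureSymmetrizer_posDef n hB
  have hsymm := isSymm_closureSymmetrizer_mul h₁ h₂ h₃
  refine ⟨closureSymmetrizer n !![p, q; q, s], hA₀, fun i j hi hij => ?_, fun i hi => ?_, hsymm,
    realDiagonalizable_of_posDef_mul_isSymm hA₀ hsymm⟩
  · rw [closureSymmetrizer_apply_of_lt _ (by omega), if_neg hij]
  · rw [closureSymmetrizer_apply_of_lt _ (by omega), if_pos rfl]
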